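/- arXiv:math/0404121 — 2 statements merged into one kernel-verified Lean document; each statement's English description precedes it below -/
import Mathlib

section
/- The map ξ : ℂP² → S⁴ given by ξ([z₀:z₁:z₂]) = (2·conj(z₀)·z₁/‖z‖², 2·conj(z₀)·z₂/‖z‖², (|z₁|²+|z₂|²-|z₀|²)/‖z‖²), where ‖z‖² = |z₀|²+|z₁|²+|z₂|², is well defined (independent of the choice of homogeneous coordinates) and continuous, where S⁴ is the unit sphere in ℂ × ℂ × ℝ. -/
open Projectivization
open scoped LinearAlgebra.Projectivization

/-- The topology on the complex projective plane, as a quotient of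
`(Fin 3 → ℂ) \ {0}`. -/
noncomputable instance : TopologicalSpace (ℙ ℂ (Fin 3 → ℂ)) :=
  inferInstanceAs (TopologicalSpace (Quotient (projectivizationSetoid ℂ (Fin 3 → ℂ))))

/-- The formula for `ξ` on homogeneous coordinates. -/
noncomputable def xiRaw (z : Fin 3 → ℂ) : ℂ × ℂ × ℝ :=
  (2 * (starRingEnd ℂ) (z 0) * z 1 /
      ((Complex.normSq (z 0) + Complex.normSq (z 1) + Complex.normSq (z 2) : ℝ) : ℂ),
   2 * (starRingEnd ℂ) (z 0) * z 2 /
      ((Complex.normSq (z 0) + Complex.normSq (z 1) + Complex.normSq (z 2) : ℝ) : ℂ),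
   (Complex.normSq (z 1) + Complex.normSq (z 2) - Complex.normSq (z 0)) /
      (Complex.normSq (z 0) + Complex.normSq (z 1) + Complex.normSq (z 2)))

/-- The unit 4-sphere in `ℂ × ℂ × ℝ`. -/
def S4 : Set (ℂ × ℂ × ℝ) :=
  {p | Complex.normSq p.1 + Complex.normSq p.2.1 + p.2.2 ^ 2 = 1}

lemma nsum_pos {z : Fin 3 → ℂ} (hz : z ≠ 0) :
    0 < Complex.normSq (z 0) + Complex.normSq (z 1) + Complex.normSq (z 2) := by
  have h0 := Complex.normSq_nonneg (z 0)
  have h1 := Complex.normSq_nonneg (z 1)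
  have h2 := Complex.normSq_nonneg (z 2)
  rcases lt_or_eq_of_le (by linarith :
      (0:ℝ) ≤ Complex.normSq (z 0) + Complex.normSq (z 1) + Complex.normSq (z 2)) with h | h
  · exact h
  · exfalso
    apply hz
    have e0 : z 0 = 0 := by rw [← Complex.normSq_eq_zero]; linarith
    have e1 : z 1 = 0 := by rw [← Complex.normSq_eq_zero]; linarith
    have e2 : z 2 = 0 := by rw [← Complex.normSq_eq_zero]; linarith
    funext i
    fin_cases i <;> simp [e0, e1, e2]

lemma xiRaw_mem {z : Fin 3 → ℂ} (hz : z ≠ 0) : xiRaw z ∈ S4 := by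
  have hN := nsum_pos hz
  have hN' : Complex.normSq (z 0) + Complex.normSq (z 1) + Complex.normSq (z 2) ≠ 0 := hN.ne'
  simp only [S4, xiRaw, Set.mem_setOf_eq, Complex.normSq_div, Complex.normSq_mul,
    Complex.normSq_conj, Complex.normSq_ofReal]
  have h2 : Complex.normSq 2 = 4 := by
    simp [Complex.normSq_apply]
    norm_num
  rw [h2]
  field_simp
  ring

lemma xiRaw_smul (c : ℂˣ) (z : Fin 3 → ℂ) : xiRaw ((c : ℂ) • z) = xiRaw z := by
  have hc : Complex.normSq (c : ℂ) ≠ 0 := by simpa using c.ne_zero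
  set m : ℝ := Complex.normSq (c : ℂ) with hm
  have hmc : (m : ℂ) ≠ 0 := by exact_mod_cast hc
  have hconj : (starRingEnd ℂ) (c : ℂ) * (c : ℂ) = (m : ℂ) := by
    rw [mul_comm]; exact Complex.mul_conj _
  simp only [xiRaw, Pi.smul_apply, smul_eq_mul, map_mul, Complex.normSq_mul, ← hm]
  have hden : ((m * Complex.normSq (z 0) + m * Complex.normSq (z 1)
      + m * Complex.normSq (z 2) : ℝ) : ℂ)
      = (m : ℂ) * ((Complex.normSq (z 0) + Complex.normSq (z 1)
        + Complex.normSq (z 2) : ℝ) : ℂ) := by push_cast; ring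
  have hnum1 : 2 * ((starRingEnd ℂ) (c : ℂ) * (starRingEnd ℂ) (z 0)) * ((c : ℂ) * z 1)
      = (m : ℂ) * (2 * (starRingEnd ℂ) (z 0) * z 1) := by rw [← hconj]; ring
  have hnum2 : 2 * ((starRingEnd ℂ) (c : ℂ) * (starRingEnd ℂ) (z 0)) * ((c : ℂ) * z 2)
      = (m : ℂ) * (2 * (starRingEnd ℂ) (z 0) * z 2) := by rw [← hconj]; ring
  have hr1 : m * Complex.normSq (z 1) + m * Complex.normSq (z 2) - m * Complex.normSq (z 0)
      = m * (Complex.normSq (z 1) + Complex.normSq (z 2) - Complex.normSq (z 0)) := by ring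
  have hr2 : m * Complex.normSq (z 0) + m * Complex.normSq (z 1) + m * Complex.normSq (z 2)
      = m * (Complex.normSq (z 0) + Complex.normSq (z 1) + Complex.normSq (z 2)) := by ring
  rw [hden, hnum1, hnum2, hr1, hr2, mul_div_mul_left _ _ hmc, mul_div_mul_left _ _ hmc,
    mul_div_mul_left _ _ hc]


/-- The map `ξ : ℂP² → S⁴` given by
`ξ[z₀:z₁:z₂] = (2 z̄₀z₁/‖z‖², 2 z̄₀z₂/‖z‖², (|z₁|²+|z₂|²-|z₀|²)/‖z‖²)` is well
defined (independent of homogeneous coordinates) and continuous. -/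
theorem xi_well_defined_continuous :
    ∃ ξ : ℙ ℂ (Fin 3 → ℂ) → S4,
      Continuous ξ ∧
      ∀ (z : Fin 3 → ℂ) (hz : z ≠ 0),
        (ξ (Projectivization.mk ℂ z hz) : ℂ × ℂ × ℝ) = xiRaw z := by
  set f : {v : Fin 3 → ℂ // v ≠ 0} → S4 := fun v => ⟨xiRaw v.1, xiRaw_mem v.2⟩ with hf
  have hresp : ∀ a b : {v : Fin 3 → ℂ // v ≠ 0},
      (projectivizationSetoid ℂ (Fin 3 → ℂ)).r a b → f a = f b := by
    rintro a b ⟨c, hc⟩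
    apply Subtype.ext
    simp only [hf]
    have : (a : Fin 3 → ℂ) = (c : ℂ) • (b : Fin 3 → ℂ) := by
      exact_mod_cast hc.symm
    rw [this, xiRaw_smul]
  refine ⟨Quotient.lift f hresp, ?_, fun z hz => rfl⟩
  apply continuous_quot_lift
  rw [hf]
  apply Continuous.subtype_mk
  have hcont : ∀ i : Fin 3, Continuous fun v : {v : Fin 3 → ℂ // v ≠ 0} => v.1 i :=
    fun i => (continuous_apply i).comp continuous_subtype_val
  have hNc : Continuous fun v : {v : Fin 3 → ℂ // v ≠ 0} =>
      Complex.normSq (v.1 0) + Complex.normSq (v.1 1) + Complex.normSq (v.1 2) :=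
    ((Complex.continuous_normSq.comp (hcont 0)).add
      (Complex.continuous_normSq.comp (hcont 1))).add
      (Complex.continuous_normSq.comp (hcont 2))
  have hNne : ∀ v : {v : Fin 3 → ℂ // v ≠ 0},
      Complex.normSq (v.1 0) + Complex.normSq (v.1 1) + Complex.normSq (v.1 2) ≠ 0 :=
    fun v => (nsum_pos v.2).ne'
  unfold xiRaw
  refine Continuous.prodMk ?_ (Continuous.prodMk ?_ ?_)
  · exact Continuous.div
      ((continuous_const.mul (Complex.continuous_conj.comp (hcont 0))).mul (hcont 1))
      (Complex.continuous_ofReal.comp hNc) fun v => by exact_mod_cast hNne v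
  · exact Continuous.div
      ((continuous_const.mul (Complex.continuous_conj.comp (hcont 0))).mul (hcont 2))
      (Complex.continuous_ofReal.comp hNc) fun v => by exact_mod_cast hNne v
  · exact Continuous.div
      (((Complex.continuous_normSq.comp (hcont 1)).add
        (Complex.continuous_normSq.comp (hcont 2))).sub
        (Complex.continuous_normSq.comp (hcont 0))) hNc hNne
end

section
/- The map ξ : ℂP² → S⁴ above is equivariant with respect to the SU(2)-actions: for A ∈ SU(2) acting on ℂP² by [z₀:z₁:z₂] ↦ [z₀ : (A⁻¹(z₁,z₂))₁ : (A⁻¹(z₁,z₂))₂] and on S⁴ by (w₁,w₂,t) ↦ ((A⁻¹(w₁,w₂))₁, (A⁻¹(w₁,w₂))₂, t), we have ξ(A·p) = A·ξ(p) for all p ∈ ℂP². -/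
open Projectivization
open scoped LinearAlgebra.Projectivization

/-- The `SU(2)`-action on homogeneous coordinates for `ℂP²`:
`[z₀:z₁:z₂] ↦ [z₀ : (A⁻¹(z₁,z₂))₁ : (A⁻¹(z₁,z₂))₂]`. -/
noncomputable def cpAct (A : Matrix.specialUnitaryGroup (Fin 2) ℂ)
    (z : Fin 3 → ℂ) : Fin 3 → ℂ :=
  ![z 0,
    ((A : Matrix (Fin 2) (Fin 2) ℂ)⁻¹ 0 0) * z 1 +
      ((A : Matrix (Fin 2) (Fin 2) ℂ)⁻¹ 0 1) * z 2,
    ((A : Matrix (Fin 2) (Fin 2) ℂ)⁻¹ 1 0) * z 1 +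
      ((A : Matrix (Fin 2) (Fin 2) ℂ)⁻¹ 1 1) * z 2]

/-- The `SU(2)`-action on `S⁴ ⊆ ℂ × ℂ × ℝ`:
`(w₁,w₂,t) ↦ ((A⁻¹(w₁,w₂))₁, (A⁻¹(w₁,w₂))₂, t)`. -/
noncomputable def s4Act (A : Matrix.specialUnitaryGroup (Fin 2) ℂ)
    (p : ℂ × ℂ × ℝ) : ℂ × ℂ × ℝ :=
  (((A : Matrix (Fin 2) (Fin 2) ℂ)⁻¹ 0 0) * p.1 +
      ((A : Matrix (Fin 2) (Fin 2) ℂ)⁻¹ 0 1) * p.2.1,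
   ((A : Matrix (Fin 2) (Fin 2) ℂ)⁻¹ 1 0) * p.1 +
      ((A : Matrix (Fin 2) (Fin 2) ℂ)⁻¹ 1 1) * p.2.1,
   p.2.2)

/-- The map `ξ : ℂP² → S⁴` is `SU(2)`-equivariant: `ξ(A · p) = A · ξ(p)` for
all `p ∈ ℂP²`. -/
theorem xi_su2_equivariant (ξ : ℙ ℂ (Fin 3 → ℂ) → ℂ × ℂ × ℝ)
    (hξ : ∀ (z : Fin 3 → ℂ) (hz : z ≠ 0),
      ξ (Projectivization.mk ℂ z hz) = xiRaw z) :
    ∀ (A : Matrix.specialUnitaryGroup (Fin 2) ℂ) (z : Fin 3 → ℂ)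
      (hz : z ≠ 0) (hz' : cpAct A z ≠ 0),
      ξ (Projectivization.mk ℂ (cpAct A z) hz') =
        s4Act A (ξ (Projectivization.mk ℂ z hz)) := by
  intro A z hz hz'
  rw [hξ _ hz', hξ _ hz]
  set M : Matrix (Fin 2) (Fin 2) ℂ := (A : Matrix (Fin 2) (Fin 2) ℂ) with hM
  have hinv : M⁻¹ = star M := Matrix.inv_eq_left_inv A.2.1.1
  have hMM : M * star M = 1 := A.2.1.2
  have e00 := congrFun (congrFun hMM 0) 0
  have e01 := congrFun (congrFun hMM 0) 1
  have e10 := congrFun (congrFun hMM 1) 0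
  have e11 := congrFun (congrFun hMM 1) 1
  simp [Matrix.mul_apply, Fin.sum_univ_two, Matrix.star_apply,
    Matrix.one_apply, RCLike.star_def] at e00 e01 e10 e11
  have key : Complex.normSq (M⁻¹ 0 0 * z 1 + M⁻¹ 0 1 * z 2) +
      Complex.normSq (M⁻¹ 1 0 * z 1 + M⁻¹ 1 1 * z 2) =
      Complex.normSq (z 1) + Complex.normSq (z 2) := by
    have : ((Complex.normSq (M⁻¹ 0 0 * z 1 + M⁻¹ 0 1 * z 2) +
        Complex.normSq (M⁻¹ 1 0 * z 1 + M⁻¹ 1 1 * z 2) : ℝ) : ℂ) =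
        ((Complex.normSq (z 1) + Complex.normSq (z 2) : ℝ) : ℂ) := by
      push_cast [← Complex.mul_conj]
      rw [hinv]
      simp only [Matrix.star_apply, RCLike.star_def, map_add, map_mul,
        Complex.conj_conj]
      linear_combination (starRingEnd ℂ (z 1) * z 1) * e00 +
        (starRingEnd ℂ (z 2) * z 2) * e11 +
        (starRingEnd ℂ (z 1) * z 2) * e01 + (starRingEnd ℂ (z 2) * z 1) * e10
    exact_mod_cast this
  have hN : Complex.normSq (z 0) + Complex.normSq (M⁻¹ 0 0 * z 1 + M⁻¹ 0 1 * z 2) +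
      Complex.normSq (M⁻¹ 1 0 * z 1 + M⁻¹ 1 1 * z 2) =
      Complex.normSq (z 0) + Complex.normSq (z 1) + Complex.normSq (z 2) := by
    rw [add_assoc, key, add_assoc]
  simp only [xiRaw, cpAct, s4Act, Matrix.cons_val_zero, Matrix.cons_val_one,
    Matrix.head_cons, Matrix.cons_val_two, Matrix.tail_cons, ← hM]
  rw [hN]
  refine Prod.ext ?_ (Prod.ext ?_ ?_)
  · simp only [div_eq_mul_inv]; ring
  · simp only [div_eq_mul_inv]; ring
  · show (_ - _) / _ = _
    rw [key]
end
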